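/- In the single-retailer three-level serial chain, for any feasible integer solution, any l ≥ 3, boundaries l_0 < l_1 < l with l_0 ≤ l−2 and l_1 ≤ l−1, and sets S^0 ⊆ {1,...,l_0}, S^1 ⊆ {l_0+1,...,l_1}, S^2 ⊆ {l_1+1,...,l}, the three-level inequality Σ_{k ∈ {1,...,l_0}\S^0} x^0_k + Σ_{k ∈ S^0} d_{k,l} y^0_k + Σ_{k ∈ {l_0+1,...,l_1}\S^1} x^1_k + Σ_{k ∈ S^1} d_{k,l} y^1_k + Σ_{k ∈ {l_1+1,...,l}\S^2} x^2_k + Σ_{k ∈ S^2} d_{k,l} y^2_k ≥ d_{1,l} holds. -/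

import Mathlib

/-!
Let `t` be the first period of `S⁰ ∪ S¹ ∪ S²` with an open setup at the level owning it (or
`t = l + 1` if there is none). Every period `k < t` of some `Sᵇ` has `yᵇ_k = 0`, hence `xᵇ_k = 0`,
so the `x`-terms of the inequality contain all production of level `b` in its own periods before
`t`. Stocks are nonnegative, so this production covers `d_{1,t-1}`, while the `y`-term of the setup
at `t` contributes `d_{t,l}`.
-/

open Finset

theorem sum_Icc_one_eq_add_of_balance {N : ℕ} {f g h : ℕ → ℝ} (hg0 : g 0 = 0)
    (hbal : ∀ t ∈ Icc 1 N, g (t - 1) + f t = h t + g t) {m : ℕ} (hm : m ≤ N) :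
    ∑ k ∈ Icc 1 m, f k = ∑ k ∈ Icc 1 m, h k + g m := by
  induction m with
  | zero => simp [hg0]
  | succ n ih =>
    have hb := hbal (n + 1) (mem_Icc.mpr ⟨by omega, hm⟩)
    rw [Nat.add_sub_cancel] at hb
    rw [sum_Icc_succ_top (by omega), sum_Icc_succ_top (by omega), ih (by omega)]
    linarith

theorem sum_Icc_one_le_of_balance {N : ℕ} {f g h : ℕ → ℝ} (hg0 : g 0 = 0)
    (hbal : ∀ t ∈ Icc 1 N, g (t - 1) + f t = h t + g t) (hg : ∀ t ∈ Icc 1 N, 0 ≤ g t)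
    {m : ℕ} (hm : m ≤ N) :
    ∑ k ∈ Icc 1 m, h k ≤ ∑ k ∈ Icc 1 m, f k := by
  have hgm : 0 ≤ g m := by
    rcases Nat.eq_zero_or_pos m with rfl | hpos
    · exact hg0.ge
    · exact hg m (mem_Icc.mpr ⟨hpos, hm⟩)
  linarith [sum_Icc_one_eq_add_of_balance hg0 hbal hm]

theorem sum_Icc_one_eq_sum_Icc_one_min_add {M : Type*} [AddCommMonoid M] (f : ℕ → M) (a m : ℕ) :
    ∑ k ∈ Icc 1 m, f k = ∑ k ∈ Icc 1 (min a m), f k + ∑ k ∈ Icc (a + 1) m, f k := by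
  rw [← sum_filter_add_sum_filter_not (Icc 1 m) (· ≤ a)]
  congr 2 <;> ext k <;> simp only [mem_filter, mem_Icc] <;> omega

theorem sum_le_sum_sdiff_of_eq_zero {ι M : Type*} [DecidableEq ι] [AddCommMonoid M]
    [PartialOrder M] [IsOrderedAddMonoid M] {s t S : Finset ι} {f : ι → M} (hst : s ⊆ t)
    (hf : ∀ k ∈ t, 0 ≤ f k) (hS : ∀ k ∈ s, k ∈ S → f k = 0) :
    ∑ k ∈ s, f k ≤ ∑ k ∈ t \ S, f k := by
  calc ∑ k ∈ s, f k = ∑ k ∈ s \ S, f k :=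
        (sum_subset sdiff_subset fun k hk hkS => hS k hk (by simpa [hk] using hkS)).symm
    _ ≤ ∑ k ∈ t \ S, f k :=
        sum_le_sum_of_subset_of_nonneg (sdiff_subset_sdiff hst le_rfl)
          fun k hk _ => hf k (mem_sdiff.mp hk).1

theorem chain_demand_le_production {N : ℕ} {d : ℕ → ℝ} {x s : Fin 3 → ℕ → ℝ}
    (hs0 : ∀ b, s b 0 = 0)
    (hbal0 : ∀ t ∈ Icc 1 N, s 0 (t - 1) + x 0 t = x 1 t + s 0 t)
    (hbal1 : ∀ t ∈ Icc 1 N, s 1 (t - 1) + x 1 t = x 2 t + s 1 t)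
    (hbal2 : ∀ t ∈ Icc 1 N, s 2 (t - 1) + x 2 t = d t + s 2 t)
    (hs : ∀ b, ∀ t ∈ Icc 1 N, 0 ≤ s b t) {l0 l1 m : ℕ} (h01 : l0 ≤ l1) (hm : m ≤ N) :
    ∑ k ∈ Icc 1 m, d k ≤ ∑ k ∈ Icc 1 (min l0 m), x 0 k + ∑ k ∈ Icc (l0 + 1) (min l1 m), x 1 k
      + ∑ k ∈ Icc (l1 + 1) m, x 2 k := by
  have h2 := sum_Icc_one_le_of_balance (hs0 2) hbal2 (hs 2) hm
  have h1 := sum_Icc_one_le_of_balance (hs0 1) hbal1 (hs 1) (m := min l1 m) (by omega)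
  have h0 := sum_Icc_one_le_of_balance (hs0 0) hbal0 (hs 0) (m := min l0 m) (by omega)
  have split2 := sum_Icc_one_eq_sum_Icc_one_min_add (x 2) l1 m
  have split1 := sum_Icc_one_eq_sum_Icc_one_min_add (x 1) l0 (min l1 m)
  rw [show min l0 (min l1 m) = min l0 m by omega] at split1
  linarith

theorem sum_Icc_le_sum_sdiff_of_first_setup {N : ℕ} {c x y : ℕ → ℝ}
    (hset : ∀ t ∈ Icc 1 N, x t ≤ c t * y t) (hy : ∀ t ∈ Icc 1 N, y t = 0 ∨ y t = 1)
    (hx : ∀ t ∈ Icc 1 N, 0 ≤ x t) {a b : ℕ} (ha : 1 ≤ a) (hb : b ≤ N) {S : Finset ℕ} {t : ℕ}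
    (hfirst : ∀ k ∈ S, y k = 1 → t ≤ k) :
    ∑ k ∈ Icc a (min b (t - 1)), x k ≤ ∑ k ∈ Icc a b \ S, x k := by
  have hab : Icc a b ⊆ Icc 1 N := Icc_subset_Icc ha hb
  refine sum_le_sum_sdiff_of_eq_zero (Icc_subset_Icc_right (min_le_left _ _))
    (fun k hk => hx k (hab hk)) fun k hk hkS => ?_
  have hkN : k ∈ Icc 1 N := hab (Icc_subset_Icc_right (min_le_left _ _) hk)
  have hyk : y k = 0 := (hy k hkN).resolve_right fun h1 => by
    have := hfirst k hkS h1
    simp only [mem_Icc] at hk hkN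
    omega
  exact le_antisymm (by simpa [hyk] using hset k hkN) (hx k hkN)

theorem setup_term_nonneg {N l : ℕ} {d y : ℕ → ℝ} (hd : ∀ t ∈ Icc 1 N, 0 ≤ d t)
    (hy : ∀ t ∈ Icc 1 N, y t = 0 ∨ y t = 1) (hl : l ≤ N) {k : ℕ} (hk : k ∈ Icc 1 N) :
    0 ≤ (∑ j ∈ Icc k l, d j) * y k := by
  refine mul_nonneg (sum_nonneg fun j hj => hd j ?_) ?_
  · simp only [mem_Icc] at hj hk ⊢
    omega
  · rcases hy k hk with h | h <;> simp [h]

theorem le_sum_mul_of_eq_one {ι R : Type*} [Semiring R] [PartialOrder R] [IsOrderedRing R]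
    {S : Finset ι} {c y : ι → R} (hnn : ∀ k ∈ S, 0 ≤ c k * y k)
    {t : ι} (ht : t ∈ S) (hyt : y t = 1) :
    c t ≤ ∑ k ∈ S, c k * y k := by
  simpa [hyt] using single_le_sum hnn ht

theorem sum_Icc_le_setup_sums {N l : ℕ} {d : ℕ → ℝ} {y : Fin 3 → ℕ → ℝ}
    (hd : ∀ t ∈ Icc 1 N, 0 ≤ d t) (hy : ∀ b, ∀ t ∈ Icc 1 N, y b t = 0 ∨ y b t = 1)
    (hl : l ≤ N) {S0 S1 S2 : Finset ℕ}
    (hS0 : S0 ⊆ Icc 1 N) (hS1 : S1 ⊆ Icc 1 N) (hS2 : S2 ⊆ Icc 1 N) {t : ℕ}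
    (ht : t = l + 1 ∨ t ∈ {k ∈ S0 | y 0 k = 1} ∪ {k ∈ S1 | y 1 k = 1} ∪ {k ∈ S2 | y 2 k = 1}) :
    ∑ j ∈ Icc t l, d j ≤ ∑ k ∈ S0, (∑ j ∈ Icc k l, d j) * y 0 k
      + ∑ k ∈ S1, (∑ j ∈ Icc k l, d j) * y 1 k + ∑ k ∈ S2, (∑ j ∈ Icc k l, d j) * y 2 k := by
  have hterm : ∀ b, ∀ S ⊆ Icc 1 N, ∀ k ∈ S, 0 ≤ (∑ j ∈ Icc k l, d j) * y b k :=
    fun b _ hS _ hk => setup_term_nonneg hd (hy b) hl (hS hk)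
  have h0 := sum_nonneg (hterm 0 S0 hS0)
  have h1 := sum_nonneg (hterm 1 S1 hS1)
  have h2 := sum_nonneg (hterm 2 S2 hS2)
  rcases ht with rfl | ht
  · rw [Icc_eq_empty (by omega), sum_empty]
    linarith
  simp only [mem_union, mem_filter] at ht
  rcases ht with (⟨ht, hyt⟩ | ⟨ht, hyt⟩) | ⟨ht, hyt⟩
  · linarith [le_sum_mul_of_eq_one (hterm 0 S0 hS0) ht hyt]
  · linarith [le_sum_mul_of_eq_one (hterm 1 S1 hS1) ht hyt]
  · linarith [le_sum_mul_of_eq_one (hterm 2 S2 hS2) ht hyt]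

theorem chain_three_level_inequality_general
    (NT : ℕ) (d : ℕ → ℝ) (x s y : Fin 3 → ℕ → ℝ)
    (hd : ∀ t ∈ Icc 1 NT, 0 ≤ d t)
    (hs0 : ∀ b, s b 0 = 0)
    (hbal0 : ∀ t ∈ Icc 1 NT, s 0 (t - 1) + x 0 t = x 1 t + s 0 t)
    (hbal1 : ∀ t ∈ Icc 1 NT, s 1 (t - 1) + x 1 t = x 2 t + s 1 t)
    (hbal2 : ∀ t ∈ Icc 1 NT, s 2 (t - 1) + x 2 t = d t + s 2 t)
    (hset : ∀ b, ∀ t ∈ Icc 1 NT, x b t ≤ (∑ j ∈ Icc t NT, d j) * y b t)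
    (hy : ∀ b, ∀ t ∈ Icc 1 NT, y b t = 0 ∨ y b t = 1)
    (hnn : ∀ b, ∀ t ∈ Icc 1 NT, 0 ≤ x b t ∧ 0 ≤ s b t)
    (l : ℕ) (hlNT : l ≤ NT)
    (l0 l1 : ℕ) (h01 : l0 < l1) (h1l : l1 < l)
    (S0 S1 S2 : Finset ℕ)
    (hS0 : S0 ⊆ Icc 1 l0) (hS1 : S1 ⊆ Icc (l0 + 1) l1) (hS2 : S2 ⊆ Icc (l1 + 1) l) :
    ∑ k ∈ Icc 1 l0 \ S0, x 0 k + ∑ k ∈ S0, (∑ j ∈ Icc k l, d j) * y 0 k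
      + ∑ k ∈ Icc (l0 + 1) l1 \ S1, x 1 k + ∑ k ∈ S1, (∑ j ∈ Icc k l, d j) * y 1 k
      + ∑ k ∈ Icc (l1 + 1) l \ S2, x 2 k + ∑ k ∈ S2, (∑ j ∈ Icc k l, d j) * y 2 k
      ≥ ∑ j ∈ Icc 1 l, d j := by
  have hS0' : S0 ⊆ Icc 1 NT := hS0.trans (Icc_subset_Icc le_rfl (by omega))
  have hS1' : S1 ⊆ Icc 1 NT := hS1.trans (Icc_subset_Icc (by omega) (by omega))
  have hS2' : S2 ⊆ Icc 1 NT := hS2.trans (Icc_subset_Icc (by omega) hlNT)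
  set T := {k ∈ S0 | y 0 k = 1} ∪ {k ∈ S1 | y 1 k = 1} ∪ {k ∈ S2 | y 2 k = 1}
  have hT_sub : T ⊆ Icc 1 NT := union_subset (union_subset ((filter_subset _ _).trans hS0')
    ((filter_subset _ _).trans hS1')) ((filter_subset _ _).trans hS2')
  set t := (insert (l + 1) T).min' (insert_nonempty _ _)
  have ht_le : t ≤ l + 1 := min'_le _ _ (mem_insert_self _ _)
  have ht_mem : t = l + 1 ∨ t ∈ T := mem_insert.mp (min'_mem _ _)
  have ht_pos : 1 ≤ t := ht_mem.elim (by omega) fun h => (mem_Icc.mp (hT_sub h)).1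
  have hx : ∀ b a c, 1 ≤ a → c ≤ NT → ∀ S : Finset ℕ, {k ∈ S | y b k = 1} ⊆ T →
      ∑ k ∈ Icc a (min c (t - 1)), x b k ≤ ∑ k ∈ Icc a c \ S, x b k :=
    fun b a c ha hc S hST => sum_Icc_le_sum_sdiff_of_first_setup (hset b) (hy b)
      (fun k hk => (hnn b k hk).1) ha hc fun k hk h1 =>
        min'_le _ _ (mem_insert_of_mem (hST (mem_filter.mpr ⟨hk, h1⟩)))
  have hx0 := hx 0 1 l0 le_rfl (by omega) S0 (subset_union_left.trans subset_union_left)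
  have hx1 := hx 1 (l0 + 1) l1 (by omega) (by omega) S1 (subset_union_right.trans subset_union_left)
  have hx2 := hx 2 (l1 + 1) l (by omega) hlNT S2 subset_union_right
  rw [min_eq_right (by omega : t - 1 ≤ l)] at hx2
  have hsetups := sum_Icc_le_setup_sums hd hy hlNT hS0' hS1' hS2' ht_mem
  have hflow := chain_demand_le_production (N := NT) hs0 hbal0 hbal1 hbal2
    (fun b t ht => (hnn b t ht).2) h01.le (m := t - 1) (by omega)
  have hsplit := sum_Icc_one_eq_sum_Icc_one_min_add d (t - 1) l
  rw [min_eq_left (by omega), Nat.sub_add_cancel ht_pos] at hsplit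
  linarith

/-- Three-level valid inequality for the single-retailer three-level serial chain. -/
theorem chain_three_level_inequality
    (NT : ℕ) (d : ℕ → ℝ) (x s y : Fin 3 → ℕ → ℝ)
    (hd : ∀ t ∈ Icc 1 NT, 0 ≤ d t)
    (hs0 : ∀ b, s b 0 = 0)
    (hbal0 : ∀ t ∈ Icc 1 NT, s 0 (t - 1) + x 0 t = x 1 t + s 0 t)
    (hbal1 : ∀ t ∈ Icc 1 NT, s 1 (t - 1) + x 1 t = x 2 t + s 1 t)
    (hbal2 : ∀ t ∈ Icc 1 NT, s 2 (t - 1) + x 2 t = d t + s 2 t)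
    (hset : ∀ b, ∀ t ∈ Icc 1 NT, x b t ≤ (∑ j ∈ Icc t NT, d j) * y b t)
    (hy : ∀ b, ∀ t ∈ Icc 1 NT, y b t = 0 ∨ y b t = 1)
    (hnn : ∀ b, ∀ t ∈ Icc 1 NT, 0 ≤ x b t ∧ 0 ≤ s b t)
    (l : ℕ) (hl3 : 3 ≤ l) (hlNT : l ≤ NT)
    (l0 l1 : ℕ) (h01 : l0 < l1) (h1l : l1 < l) (h0l2 : l0 + 2 ≤ l) (h1l1 : l1 + 1 ≤ l)
    (S0 S1 S2 : Finset ℕ)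
    (hS0 : S0 ⊆ Icc 1 l0) (hS1 : S1 ⊆ Icc (l0 + 1) l1) (hS2 : S2 ⊆ Icc (l1 + 1) l) :
    ∑ k ∈ Icc 1 l0 \ S0, x 0 k + ∑ k ∈ S0, (∑ j ∈ Icc k l, d j) * y 0 k
      + ∑ k ∈ Icc (l0 + 1) l1 \ S1, x 1 k + ∑ k ∈ S1, (∑ j ∈ Icc k l, d j) * y 1 k
      + ∑ k ∈ Icc (l1 + 1) l \ S2, x 2 k + ∑ k ∈ S2, (∑ j ∈ Icc k l, d j) * y 2 k
      ≥ ∑ j ∈ Icc 1 l, d j :=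
  chain_three_level_inequality_general NT d x s y hd hs0 hbal0 hbal1 hbal2 hset hy hnn l hlNT l0 l1
    h01 h1l S0 S1 S2 hS0 hS1 hS2
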